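/- Let a : {0,1,2,3} → ℕ satisfy a(0) ≥ 1, a(3) ≥ 1, no two consecutive values of a are zero, and (max a) − (min a) ≥ 2, and let n = a(0) + a(1) + a(2) + a(3). Then the standard graph S(a) contains the maximum number of edges among all n-vertex graphs with lambda chromatic number 3 if and only if the tuple (a(0), a(1), a(2), a(3)) or its reversal (a(3), a(2), a(1), a(0)) has one of the following forms for some natural number k: (k, k−1, k−2, k), (k−1, k, k−2, k), (k, k−2, k, k), or (k, k−3, k, k). -/

import Mathlib

/-- A lambda colouring (`L(2,1)`-colouring) of a simple graph: adjacent vertices get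
values at least 2 apart, and vertices at distance 2 get distinct values. -/
def IsLambdaColoring {V : Type*} (G : SimpleGraph V) (c : V → ℕ) : Prop :=
  (∀ u v, G.Adj u v → 2 ≤ Nat.dist (c u) (c v)) ∧
  (∀ u v, G.dist u v = 2 → c u ≠ c v)

/-- The lambda chromatic number: the minimum over all lambda colourings of the
maximum assigned value. -/
noncomputable def lambdaChromatic {V : Type*} [Fintype V] (G : SimpleGraph V) : ℕ :=
  sInf {t : ℕ | ∃ c : V → ℕ, IsLambdaColoring G c ∧ ∀ v, c v ≤ t}

/-- The standard graph `S(a)`: vertex set `{(m,i) : 0 ≤ m ≤ t, i < a(m)}`, with `(m,i)`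
adjacent to `(p,j)` iff `i = j` and `|m − p| ≥ 2`. -/
def StdGraph (t : ℕ) (a : ℕ → ℕ) : SimpleGraph ((m : Fin (t + 1)) × Fin (a m.val)) where
  Adj u v := u.2.val = v.2.val ∧ 2 ≤ Nat.dist u.1.val v.1.val
  symm := ⟨by
    rintro u v ⟨h1, h2⟩
    exact ⟨h1.symm, by rwa [Nat.dist_comm]⟩⟩
  loopless := ⟨by
    rintro u ⟨-, h2⟩
    simp [Nat.dist_self] at h2⟩

/-- distance-two criterion -/
lemma myDistTwo {V : Type*} (G : SimpleGraph V) {u v w : V} (hne : v ≠ w)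
    (hnadj : ¬ G.Adj v w) (h1 : G.Adj u v) (h2 : G.Adj u w) : G.dist v w = 2 := by
  have p : G.Walk v w := SimpleGraph.Walk.cons h1.symm (SimpleGraph.Walk.cons h2 SimpleGraph.Walk.nil)
  have hle : G.dist v w ≤ 2 :=
    SimpleGraph.dist_le (SimpleGraph.Walk.cons h1.symm (SimpleGraph.Walk.cons h2 SimpleGraph.Walk.nil))
  have h0 : G.dist v w ≠ 0 := by
    have hr : G.Reachable v w := ⟨p⟩
    have := hr.pos_dist_of_ne hne
    omega
  have h1' : G.dist v w ≠ 1 := by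
    intro h
    exact hnadj (SimpleGraph.dist_eq_one_iff_adj.mp h)
  omega

lemma ncard_iso {V W : Type*} {G : SimpleGraph V} {H : SimpleGraph W} (f : G ≃g H) :
    G.edgeSet.ncard = H.edgeSet.ncard := by
  rw [← Nat.card_coe_set_eq, ← Nat.card_coe_set_eq]
  exact Nat.card_congr f.mapEdgeSet

/-- rows are constant along walks in a standard graph -/
lemma row_const {t : ℕ} {a : ℕ → ℕ} {u v : (m : Fin (t+1)) × Fin (a m.val)}
    (h : (StdGraph t a).Reachable u v) : u.2.val = v.2.val := by
  obtain ⟨w⟩ := h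
  induction w with
  | nil => rfl
  | cons h _ ih => exact h.1.trans ih

lemma proj_col (a : ℕ → ℕ) :
    IsLambdaColoring (StdGraph 3 a) (fun x => x.1.val) := by
  constructor
  · intro u v h; exact h.2
  · intro u v h hcol
    have hne : u ≠ v := by
      intro he; rw [he] at h; simp [SimpleGraph.dist_self] at h
    have hreach : (StdGraph 3 a).Reachable u v := by
      by_contra hr
      rw [SimpleGraph.dist_eq_zero_of_not_reachable hr] at h
      omega
    have hrow : u.2.val = v.2.val := row_const hreach
    apply hne
    have h1 : u.1 = v.1 := Fin.ext hcol
    obtain ⟨u1, u2⟩ := u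
    obtain ⟨v1, v2⟩ := v
    simp only at h1
    subst h1
    simp only at hrow
    congr 1
    exact Fin.ext hrow

open Finset in
/-- key counting bound: edges of a graph with a lambda coloring by `{0,1,2,3}` -/
lemma edge_bound {V : Type*} [Fintype V] (G : SimpleGraph V) (c : V → ℕ)
    (hc : IsLambdaColoring G c) (h3 : ∀ v, c v ≤ 3) :
    G.edgeSet.ncard ≤
      min (univ.filter fun v => c v = 0).card (univ.filter fun v => c v = 2).card
      + min (univ.filter fun v => c v = 0).card (univ.filter fun v => c v = 3).card
      + min (univ.filter fun v => c v = 1).card (univ.filter fun v => c v = 3).card := by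
  classical
  set P : ℕ → ℕ → Sym2 V → Prop :=
    fun i j e => ∃ u v, G.Adj u v ∧ e = s(u, v) ∧ c u = i ∧ c v = j with hP
  have hPsymm : ∀ i j e, P i j e ↔ P j i e := by
    intro i j e
    constructor <;>
    · rintro ⟨u, v, hadj, rfl, hcu, hcv⟩
      exact ⟨v, u, hadj.symm, Sym2.eq_swap, hcv, hcu⟩
  set E : ℕ → ℕ → Finset (Sym2 V) := fun i j => G.edgeFinset.filter (P i j) with hE
  -- the crucial matching bound
  have key : ∀ i j : ℕ, i ≠ j → (E i j).card ≤ (univ.filter fun v => c v = i).card := by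
    intro i j hij
    rcases (E i j).eq_empty_or_nonempty with h | ⟨e0, he0⟩
    · simp [h]
    have hP0 : P i j e0 := (mem_filter.mp he0).2
    obtain ⟨u0, -, -⟩ := hP0
    have : Inhabited V := ⟨u0⟩
    set f : Sym2 V → V := fun e => if h : P i j e then h.choose else default with hf
    apply Finset.card_le_card_of_injOn f
    · intro e he
      have hPe : P i j e := (mem_filter.mp he).2
      have : f e = hPe.choose := dif_pos hPe
      rw [this]
      obtain ⟨v, hadj, heq, hcu, hcv⟩ := hPe.choose_spec
      simp [hcu]
    · intro e1 he1 e2 he2 hfe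
      have hP1 : P i j e1 := (mem_filter.mp (Finset.mem_coe.mp he1)).2
      have hP2 : P i j e2 := (mem_filter.mp (Finset.mem_coe.mp he2)).2
      rw [show f e1 = hP1.choose from dif_pos hP1,
        show f e2 = hP2.choose from dif_pos hP2] at hfe
      obtain ⟨v1, hadj1, heq1, hcu1, hcv1⟩ := hP1.choose_spec
      obtain ⟨v2, hadj2, heq2, hcu2, hcv2⟩ := hP2.choose_spec
      rw [hfe] at heq1 hadj1
      by_cases hv : v1 = v2
      · rw [heq1, hv]; exact heq2.symm
      · exfalso
        have hnadj : ¬ G.Adj v1 v2 := by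
          intro h
          have := hc.1 _ _ h
          rw [hcv1, hcv2] at this
          simp [Nat.dist_self] at this
        have := myDistTwo G hv hnadj hadj1 hadj2
        exact hc.2 _ _ this (hcv1.trans hcv2.symm)
  have key' : ∀ i j : ℕ, i ≠ j → (E i j).card ≤ (univ.filter fun v => c v = j).card := by
    intro i j hij
    have : E i j = E j i := by
      apply filter_congr
      intro e _
      simp only [hPsymm i j e, eq_self_iff_true, iff_self]
    rw [this]
    exact key j i hij.symm
  have hsub : G.edgeFinset ⊆ E 0 2 ∪ E 0 3 ∪ E 1 3 := by
    intro e he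
    induction e with
    | h u v =>
      have hadj : G.Adj u v := by rwa [SimpleGraph.mem_edgeFinset, SimpleGraph.mem_edgeSet] at he
      have hd := hc.1 _ _ hadj
      have hu := h3 u
      have hv := h3 v
      simp only [Nat.dist] at hd
      have hcase : (c u = 0 ∧ c v = 2) ∨ (c v = 0 ∧ c u = 2) ∨ (c u = 0 ∧ c v = 3) ∨
          (c v = 0 ∧ c u = 3) ∨ (c u = 1 ∧ c v = 3) ∨ (c v = 1 ∧ c u = 3) := by omega
      simp only [mem_union]
      rcases hcase with ⟨h1, h2⟩ | ⟨h1, h2⟩ | ⟨h1, h2⟩ | ⟨h1, h2⟩ | ⟨h1, h2⟩ | ⟨h1, h2⟩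
      · exact Or.inl (Or.inl (mem_filter.mpr ⟨he, u, v, hadj, rfl, h1, h2⟩))
      · exact Or.inl (Or.inl (mem_filter.mpr ⟨he, v, u, hadj.symm, Sym2.eq_swap, h1, h2⟩))
      · exact Or.inl (Or.inr (mem_filter.mpr ⟨he, u, v, hadj, rfl, h1, h2⟩))
      · exact Or.inl (Or.inr (mem_filter.mpr ⟨he, v, u, hadj.symm, Sym2.eq_swap, h1, h2⟩))
      · exact Or.inr (mem_filter.mpr ⟨he, u, v, hadj, rfl, h1, h2⟩)
      · exact Or.inr (mem_filter.mpr ⟨he, v, u, hadj.symm, Sym2.eq_swap, h1, h2⟩)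
  have hcard : G.edgeFinset.card ≤ (E 0 2).card + (E 0 3).card + (E 1 3).card := by
    calc G.edgeFinset.card ≤ (E 0 2 ∪ E 0 3 ∪ E 1 3).card := Finset.card_le_card hsub
      _ ≤ (E 0 2 ∪ E 0 3).card + (E 1 3).card := Finset.card_union_le _ _
      _ ≤ (E 0 2).card + (E 0 3).card + (E 1 3).card := by
          have := Finset.card_union_le (E 0 2) (E 0 3)
          omega
  have hn : G.edgeSet.ncard = G.edgeFinset.card := by
    rw [Set.ncard_eq_toFinset_card']
    simp [SimpleGraph.edgeFinset]
  rw [hn]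
  have b1 := le_min (key 0 2 (by omega)) (key' 0 2 (by omega))
  have b2 := le_min (key 0 3 (by omega)) (key' 0 3 (by omega))
  have b3 := le_min (key 1 3 (by omega)) (key' 1 3 (by omega))
  omega

open Finset in
lemma fiber_card (a : ℕ → ℕ) (m : ℕ) (hm : m < 4) :
    (univ.filter fun x : (p : Fin (3+1)) × Fin (a p.val) => x.1.val = m).card = a m := by
  have h : (univ.filter fun x : (p : Fin (3+1)) × Fin (a p.val) => x.1.val = m)
      = ({(⟨m, hm⟩ : Fin (3+1))} : Finset (Fin (3+1))).sigma
          (fun p => (univ : Finset (Fin (a p.val)))) := by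
    ext ⟨i, j⟩
    simp [Finset.mem_sigma, Fin.ext_iff]
  rw [h, Finset.card_sigma, Finset.sum_singleton]
  simp

open Finset in
lemma std_ub (a : ℕ → ℕ) :
    (StdGraph 3 a).edgeSet.ncard ≤ min (a 0) (a 2) + min (a 0) (a 3) + min (a 1) (a 3) := by
  have h := edge_bound (StdGraph 3 a) (fun x => x.1.val) (proj_col a)
    (fun v => Nat.lt_succ_iff.mp v.1.isLt)
  rwa [fiber_card a 0 (by omega), fiber_card a 1 (by omega), fiber_card a 2 (by omega),
    fiber_card a 3 (by omega)] at h

open Finset in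
lemma std_lb (a : ℕ → ℕ) :
    min (a 0) (a 2) + min (a 0) (a 3) + min (a 1) (a 3) ≤ (StdGraph 3 a).edgeSet.ncard := by
  classical
  have hn : (StdGraph 3 a).edgeSet.ncard = (StdGraph 3 a).edgeFinset.card := by
    rw [Set.ncard_eq_toFinset_card']
    simp [SimpleGraph.edgeFinset]
  rw [hn]
  set V4 := (m : Fin (3+1)) × Fin (a m.val) with hV4
  have mk : ∀ (m : Fin (3+1)) (i : ℕ) (h : i < a m.val), V4 := fun m i h => ⟨m, ⟨i, h⟩⟩
  set f02 : Fin (min (a 0) (a 2)) → Sym2 V4 := fun i =>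
    s((⟨0, ⟨i.val, Nat.lt_of_lt_of_le i.isLt (Nat.min_le_left _ _)⟩⟩ : V4),
      (⟨2, ⟨i.val, Nat.lt_of_lt_of_le i.isLt (Nat.min_le_right _ _)⟩⟩ : V4)) with hf02
  set f03 : Fin (min (a 0) (a 3)) → Sym2 V4 := fun i =>
    s((⟨0, ⟨i.val, Nat.lt_of_lt_of_le i.isLt (Nat.min_le_left _ _)⟩⟩ : V4),
      (⟨3, ⟨i.val, Nat.lt_of_lt_of_le i.isLt (Nat.min_le_right _ _)⟩⟩ : V4)) with hf03
  set f13 : Fin (min (a 1) (a 3)) → Sym2 V4 := fun i =>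
    s((⟨1, ⟨i.val, Nat.lt_of_lt_of_le i.isLt (Nat.min_le_left _ _)⟩⟩ : V4),
      (⟨3, ⟨i.val, Nat.lt_of_lt_of_le i.isLt (Nat.min_le_right _ _)⟩⟩ : V4)) with hf13
  have hinj02 : Function.Injective f02 := by
    intro i j h
    simp only [hf02, Sym2.eq_iff] at h
    rcases h with ⟨h1, -⟩ | ⟨h1, -⟩ <;>
    · have := congrArg (fun x : V4 => x.2.val) h1
      simp at this
      exact Fin.ext this
  have hinj03 : Function.Injective f03 := by
    intro i j h
    simp only [hf03, Sym2.eq_iff] at h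
    rcases h with ⟨h1, -⟩ | ⟨h1, -⟩ <;>
    · have := congrArg (fun x : V4 => x.2.val) h1
      simp at this
      exact Fin.ext this
  have hinj13 : Function.Injective f13 := by
    intro i j h
    simp only [hf13, Sym2.eq_iff] at h
    rcases h with ⟨h1, -⟩ | ⟨h1, -⟩ <;>
    · have := congrArg (fun x : V4 => x.2.val) h1
      simp at this
      exact Fin.ext this
  have fst_eq : ∀ {x y : V4}, x = y → x.1.val = y.1.val := fun h => by rw [h]
  have hmem02 : ∀ i, f02 i ∈ (StdGraph 3 a).edgeFinset := by
    intro i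
    rw [SimpleGraph.mem_edgeFinset, SimpleGraph.mem_edgeSet]
    exact ⟨rfl, (by decide : 2 ≤ Nat.dist 0 2)⟩
  have hmem03 : ∀ i, f03 i ∈ (StdGraph 3 a).edgeFinset := by
    intro i
    rw [SimpleGraph.mem_edgeFinset, SimpleGraph.mem_edgeSet]
    exact ⟨rfl, (by decide : 2 ≤ Nat.dist 0 3)⟩
  have hmem13 : ∀ i, f13 i ∈ (StdGraph 3 a).edgeFinset := by
    intro i
    rw [SimpleGraph.mem_edgeFinset, SimpleGraph.mem_edgeSet]
    exact ⟨rfl, (by decide : 2 ≤ Nat.dist 1 3)⟩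
  have hd1 : Disjoint (univ.image f02) (univ.image f03) := by
    rw [Finset.disjoint_left]
    rintro e he1 he2
    obtain ⟨i, -, rfl⟩ := Finset.mem_image.mp he1
    obtain ⟨j, -, hj⟩ := Finset.mem_image.mp he2
    simp only [hf02, hf03, Sym2.eq_iff] at hj
    rcases hj with ⟨h1, h2⟩ | ⟨h1, h2⟩
    · exact absurd (fst_eq h2) (by decide : ¬((3:ℕ) = 2))
    · exact absurd (fst_eq h1) (by decide : ¬((0:ℕ) = 2))
  have hd2 : Disjoint (univ.image f02) (univ.image f13) := by
    rw [Finset.disjoint_left]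
    rintro e he1 he2
    obtain ⟨i, -, rfl⟩ := Finset.mem_image.mp he1
    obtain ⟨j, -, hj⟩ := Finset.mem_image.mp he2
    simp only [hf02, hf13, Sym2.eq_iff] at hj
    rcases hj with ⟨h1, h2⟩ | ⟨h1, h2⟩
    · exact absurd (fst_eq h1) (by decide : ¬((1:ℕ) = 0))
    · exact absurd (fst_eq h1) (by decide : ¬((1:ℕ) = 2))
  have hd3 : Disjoint (univ.image f03) (univ.image f13) := by
    rw [Finset.disjoint_left]
    rintro e he1 he2
    obtain ⟨i, -, rfl⟩ := Finset.mem_image.mp he1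
    obtain ⟨j, -, hj⟩ := Finset.mem_image.mp he2
    simp only [hf03, hf13, Sym2.eq_iff] at hj
    rcases hj with ⟨h1, h2⟩ | ⟨h1, h2⟩
    · exact absurd (fst_eq h1) (by decide : ¬((1:ℕ) = 0))
    · exact absurd (fst_eq h2) (by decide : ¬((3:ℕ) = 0))
  have hsub : (univ.image f02) ∪ (univ.image f03) ∪ (univ.image f13)
      ⊆ (StdGraph 3 a).edgeFinset := by
    intro e he
    rcases Finset.mem_union.mp he with he | he
    · rcases Finset.mem_union.mp he with he | he
      · obtain ⟨i, -, rfl⟩ := Finset.mem_image.mp he; exact hmem02 i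
      · obtain ⟨i, -, rfl⟩ := Finset.mem_image.mp he; exact hmem03 i
    · obtain ⟨i, -, rfl⟩ := Finset.mem_image.mp he; exact hmem13 i
  have hcard : ((univ.image f02) ∪ (univ.image f03) ∪ (univ.image f13)).card
      = min (a 0) (a 2) + min (a 0) (a 3) + min (a 1) (a 3) := by
    rw [Finset.card_union_of_disjoint (by
      rw [Finset.disjoint_union_left]; exact ⟨hd2, hd3⟩)]
    rw [Finset.card_union_of_disjoint hd1]
    rw [Finset.card_image_of_injective _ hinj02, Finset.card_image_of_injective _ hinj03,
      Finset.card_image_of_injective _ hinj13]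
    simp
  calc min (a 0) (a 2) + min (a 0) (a 3) + min (a 1) (a 3)
      = ((univ.image f02) ∪ (univ.image f03) ∪ (univ.image f13)).card := hcard.symm
    _ ≤ (StdGraph 3 a).edgeFinset.card := Finset.card_le_card hsub

lemma std_count (a : ℕ → ℕ) :
    (StdGraph 3 a).edgeSet.ncard = min (a 0) (a 2) + min (a 0) (a 3) + min (a 1) (a 3) :=
  le_antisymm (std_ub a) (std_lb a)

lemma std_ext {t : ℕ} {a : ℕ → ℕ} {u v : (m : Fin (t+1)) × Fin (a m.val)}
    (h1 : u.1.val = v.1.val) (h2 : u.2.val = v.2.val) : u = v := by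
  obtain ⟨u1, u2⟩ := u
  obtain ⟨v1, v2⟩ := v
  simp only at h1 h2
  have : u1 = v1 := Fin.ext h1
  subst this
  congr 1
  exact Fin.ext h2

lemma lambda_eq_three {b : ℕ → ℕ} (hb0 : 1 ≤ b 0) (hb2 : 1 ≤ b 2) (hb3 : 1 ≤ b 3)
    {W : Type*} [Fintype W] {H : SimpleGraph W} (f : StdGraph 3 b ≃g H) :
    lambdaChromatic H = 3 := by
  classical
  set c0 : W → ℕ := fun w => (f.symm w).1.val with hc0
  have hcol : IsLambdaColoring H c0 := by
    constructor
    · intro u v huv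
      have : (StdGraph 3 b).Adj (f.symm u) (f.symm v) := f.symm.map_rel_iff.mpr huv
      exact this.2
    · intro u v hd hcc
      have hne : u ≠ v := by
        intro he; rw [he] at hd; simp [SimpleGraph.dist_self] at hd
      have hreach : H.Reachable u v := by
        by_contra hr
        rw [SimpleGraph.dist_eq_zero_of_not_reachable hr] at hd
        omega
      have hreach' : (StdGraph 3 b).Reachable (f.symm u) (f.symm v) :=
        SimpleGraph.Reachable.map f.symm.toHom hreach
      have hrow := row_const hreach'
      have : f.symm u = f.symm v := std_ext hcc hrow
      exact hne (f.symm.injective this)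
  have h3mem : 3 ∈ {t : ℕ | ∃ c : W → ℕ, IsLambdaColoring H c ∧ ∀ v, c v ≤ t} :=
    ⟨c0, hcol, fun v => Nat.lt_succ_iff.mp (f.symm v).1.isLt⟩
  have hub : lambdaChromatic H ≤ 3 := Nat.sInf_le h3mem
  have hlb : 3 ≤ lambdaChromatic H := by
    apply le_csInf ⟨3, h3mem⟩
    rintro t ⟨c, hcL, hcle⟩
    by_contra hlt
    push_neg at hlt
    set x := f ⟨0, ⟨0, hb0⟩⟩ with hx
    set y := f ⟨2, ⟨0, hb2⟩⟩ with hy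
    set z := f ⟨3, ⟨0, hb3⟩⟩ with hz
    have hxy : H.Adj x y := f.map_rel_iff.mpr ⟨rfl, (by decide : 2 ≤ Nat.dist 0 2)⟩
    have hxz : H.Adj x z := f.map_rel_iff.mpr ⟨rfl, (by decide : 2 ≤ Nat.dist 0 3)⟩
    have hyz : ¬ H.Adj y z := by
      intro h
      have := (f.map_rel_iff.mp h).2
      exact absurd this (by decide : ¬(2 ≤ Nat.dist 2 3))
    have hyzne : y ≠ z := by
      intro h
      have := f.injective h
      have := congrArg (fun w : (m : Fin (3+1)) × Fin (b m.val) => w.1.val) this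
      exact absurd this (by decide : ¬((2:ℕ) = 3))
    have hdist : H.dist y z = 2 := myDistTwo H hyzne hyz hxy hxz
    have h1 := hcL.1 _ _ hxy
    have h2 := hcL.1 _ _ hxz
    have h3 := hcL.2 _ _ hdist
    have k1 := hcle x
    have k2 := hcle y
    have k3 := hcle z
    simp only [Nat.dist] at h1 h2
    omega
  omega

lemma arith_ub (n b0 b1 b2 b3 : ℕ) (h : b0 + b1 + b2 + b3 = n) :
    min b0 b2 + min b0 b3 + min b1 b3 ≤ 3 * n / 4 := by omega

open Finset in
lemma upper_any {n : ℕ} (H : SimpleGraph (Fin n)) (h : lambdaChromatic H = 3) :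
    H.edgeSet.ncard ≤ 3 * n / 4 := by
  classical
  have hne : {t : ℕ | ∃ c : Fin n → ℕ, IsLambdaColoring H c ∧ ∀ v, c v ≤ t}.Nonempty := by
    by_contra h'
    rw [Set.not_nonempty_iff_eq_empty] at h'
    have h2 : lambdaChromatic H = 0 := by rw [lambdaChromatic, h', Nat.sInf_empty]
    omega
  have hmem := Nat.sInf_mem hne
  have h' : sInf {t : ℕ | ∃ c : Fin n → ℕ, IsLambdaColoring H c ∧ ∀ v, c v ≤ t} = 3 := h
  rw [h'] at hmem
  obtain ⟨c, hcol, hle⟩ := hmem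
  have hb := edge_bound H c hcol hle
  have hsum : (univ.filter fun v => c v = 0).card + (univ.filter fun v => c v = 1).card
      + (univ.filter fun v => c v = 2).card + (univ.filter fun v => c v = 3).card = n := by
    have := Finset.card_eq_sum_card_fiberwise
      (f := c) (s := (univ : Finset (Fin n))) (t := range 4)
      (fun x _ => Finset.mem_range.mpr (Nat.lt_succ_of_le (hle x)))
    rw [Finset.card_univ, Fintype.card_fin] at this
    rw [show (4:ℕ) = 3+1 from rfl, Finset.sum_range_succ, Finset.sum_range_succ,
      Finset.sum_range_succ, Finset.sum_range_one] at this
    exact this.symm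
  exact le_trans hb (arith_ub n _ _ _ _ hsum)

def bstar (n : ℕ) : ℕ → ℕ := fun m =>
  if m = 0 then n / 4 + min (n % 4) 1
  else if m = 1 then n / 4
  else if m = 2 then n / 4 + n % 4 / 3
  else n / 4 + n % 4 / 2

lemma exists_max_graph {n : ℕ} (hn4 : 4 ≤ n) :
    ∃ H : SimpleGraph (Fin n), lambdaChromatic H = 3 ∧ H.edgeSet.ncard = 3 * n / 4 := by
  classical
  have hcard : Fintype.card ((m : Fin (3+1)) × Fin ((bstar n) m.val)) = n := by
    rw [Fintype.card_sigma]
    rw [Fin.sum_univ_four]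
    simp only [Fintype.card_fin]
    show bstar n 0 + bstar n 1 + bstar n 2 + bstar n 3 = n
    simp [bstar]
    omega
  have iso := (StdGraph 3 (bstar n)).overFinIso hcard
  refine ⟨_, lambda_eq_three ?_ ?_ ?_ iso, ?_⟩
  · simp [bstar]; omega
  · simp [bstar]; omega
  · simp [bstar]; omega
  · rw [← ncard_iso iso, std_count]
    simp [bstar]
    omega

set_option maxHeartbeats 2000000 in
lemma arith_main (a0 a1 a2 a3 n : ℕ) (h0 : 1 ≤ a0) (h3 : 1 ≤ a3)
    (hc1 : ¬(a0 = 0 ∧ a1 = 0)) (hc2 : ¬(a1 = 0 ∧ a2 = 0)) (hc3 : ¬(a2 = 0 ∧ a3 = 0))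
    (hgap : min (min a0 a1) (min a2 a3) + 2 ≤ max (max a0 a1) (max a2 a3))
    (hn : n = a0 + a1 + a2 + a3) :
    (min a0 a2 + min a0 a3 + min a1 a3 = 3 * n / 4) ↔
    (∃ k : ℕ,
      ((a0 = k ∧ a1 + 1 = k ∧ a2 + 2 = k ∧ a3 = k) ∨
       (a0 + 1 = k ∧ a1 = k ∧ a2 + 2 = k ∧ a3 = k) ∨
       (a0 = k ∧ a1 + 2 = k ∧ a2 = k ∧ a3 = k) ∨
       (a0 = k ∧ a1 + 3 = k ∧ a2 = k ∧ a3 = k) ∨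
       (a3 = k ∧ a2 + 1 = k ∧ a1 + 2 = k ∧ a0 = k) ∨
       (a3 + 1 = k ∧ a2 = k ∧ a1 + 2 = k ∧ a0 = k) ∨
       (a3 = k ∧ a2 + 2 = k ∧ a1 = k ∧ a0 = k) ∨
       (a3 = k ∧ a2 + 3 = k ∧ a1 = k ∧ a0 = k))) := by
  subst hn
  constructor
  · intro h
    obtain ⟨q, r, hqr, hr4⟩ : ∃ q r, a0 + a1 + a2 + a3 = 4 * q + r ∧ r < 4 :=
      ⟨(a0 + a1 + a2 + a3) / 4, (a0 + a1 + a2 + a3) % 4, by omega, by omega⟩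
    have h' : min a0 a2 + min a0 a3 + min a1 a3 = 3 * q + 3 * r / 4 := by omega
    clear h
    interval_cases r
    · exact absurd h' (by omega)
    · rcases Nat.lt_trichotomy a1 a2 with hx | hx | hx
      · rcases Nat.lt_trichotomy a3 a2 with hy | hy | hy
        · exact ⟨a0, Or.inr (Or.inr (Or.inr (Or.inr (Or.inr (Or.inl (by omega))))))⟩
        · exact ⟨a0, Or.inr (Or.inr (Or.inr (Or.inl (by omega))))⟩
        · exact ⟨a0, Or.inr (Or.inr (Or.inr (Or.inr (Or.inl (by omega)))))⟩
      · exact absurd h' (by omega)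
      · rcases Nat.lt_trichotomy a0 a1 with hy | hy | hy
        · exact ⟨a3, Or.inr (Or.inl (by omega))⟩
        · exact ⟨a0, Or.inr (Or.inr (Or.inr (Or.inr (Or.inr (Or.inr (Or.inr (by omega)))))))⟩
        · exact ⟨a3, Or.inl (by omega)⟩
    · rcases Nat.lt_trichotomy a1 a2 with hx | hx | hx
      · exact ⟨a0, Or.inr (Or.inr (Or.inl (by omega)))⟩
      · exact absurd h' (by omega)
      · exact ⟨a0, Or.inr (Or.inr (Or.inr (Or.inr (Or.inr (Or.inr (Or.inl (by omega)))))))⟩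
    · exact absurd h' (by omega)
  · rintro ⟨k, h⟩
    rcases h with h|h|h|h|h|h|h|h <;> omega

/-- Classification for `t = 3`, `∇ ≥ 2`: under the stated hypotheses, `S(a)` has the
maximum number of edges among all `n`-vertex graphs with lambda chromatic number 3 iff
`(a 0, a 1, a 2, a 3)` or its reversal has one of the forms `(k, k−1, k−2, k)`,
`(k−1, k, k−2, k)`, `(k, k−2, k, k)`, `(k, k−3, k, k)`. -/
theorem stmt_16 (a : ℕ → ℕ) (h0 : 1 ≤ a 0) (h3 : 1 ≤ a 3)
    (hcons : ∀ i, i + 1 ≤ 3 → ¬(a i = 0 ∧ a (i + 1) = 0))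
    (hgap : (Finset.range 4).inf' ⟨0, by simp⟩ a + 2 ≤ (Finset.range 4).sup a)
    (n : ℕ) (hn : n = a 0 + a 1 + a 2 + a 3) :
    (∀ H : SimpleGraph (Fin n), lambdaChromatic H = 3 →
        H.edgeSet.ncard ≤ (StdGraph 3 a).edgeSet.ncard) ↔
    (∃ k : ℕ,
      -- forms for (a 0, a 1, a 2, a 3)
      ((a 0 = k ∧ a 1 + 1 = k ∧ a 2 + 2 = k ∧ a 3 = k) ∨
       (a 0 + 1 = k ∧ a 1 = k ∧ a 2 + 2 = k ∧ a 3 = k) ∨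
       (a 0 = k ∧ a 1 + 2 = k ∧ a 2 = k ∧ a 3 = k) ∨
       (a 0 = k ∧ a 1 + 3 = k ∧ a 2 = k ∧ a 3 = k) ∨
      -- forms for the reversal (a 3, a 2, a 1, a 0)
       (a 3 = k ∧ a 2 + 1 = k ∧ a 1 + 2 = k ∧ a 0 = k) ∨
       (a 3 + 1 = k ∧ a 2 = k ∧ a 1 + 2 = k ∧ a 0 = k) ∨
       (a 3 = k ∧ a 2 + 2 = k ∧ a 1 = k ∧ a 0 = k) ∨
       (a 3 = k ∧ a 2 + 3 = k ∧ a 1 = k ∧ a 0 = k))) := by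
  have hgap' : min (min (a 0) (a 1)) (min (a 2) (a 3)) + 2
      ≤ max (max (a 0) (a 1)) (max (a 2) (a 3)) := by
    obtain ⟨i, hi, hieq⟩ := Finset.exists_mem_eq_inf' (⟨0, by simp⟩ :
      (Finset.range 4).Nonempty) a
    obtain ⟨j, hj, hjeq⟩ := Finset.exists_mem_eq_sup (Finset.range 4) ⟨0, by simp⟩ a
    rw [hieq, hjeq] at hgap
    rw [Finset.mem_range] at hi hj
    interval_cases i <;> interval_cases j <;> omega
  have hc1 : ¬(a 0 = 0 ∧ a 1 = 0) := hcons 0 (by omega)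
  have hc2 : ¬(a 1 = 0 ∧ a 2 = 0) := hcons 1 (by omega)
  have hc3 : ¬(a 2 = 0 ∧ a 3 = 0) := hcons 2 (by omega)
  have hn4 : 4 ≤ n := by omega
  have hmain := arith_main (a 0) (a 1) (a 2) (a 3) n h0 h3 hc1 hc2 hc3 hgap' hn
  constructor
  · intro hL
    obtain ⟨H, hH3, hHcard⟩ := exists_max_graph hn4
    have h1 := hL H hH3
    rw [hHcard, std_count] at h1
    have h2 := arith_ub n (a 0) (a 1) (a 2) (a 3) hn.symm
    exact hmain.mp (le_antisymm h2 h1)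
  · intro hR H hH3
    rw [std_count]
    calc H.edgeSet.ncard ≤ 3 * n / 4 := upper_any H hH3
      _ = min (a 0) (a 2) + min (a 0) (a 3) + min (a 1) (a 3) := (hmain.mpr hR).symm
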